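/- Let p ∈ ℝ² be a boundary point of R ⊕ D, where R ⊆ ℝ² is any set and D is the closed unit disk, such that p ∈ ∂D_q for some q ∈ R (D_q the closed unit disk centered at q). Let σ be a circle through p such that an arc of σ containing p lies on ∂(R ⊕ D). Then σ and the circle ∂D_q are tangent at p, i.e., they have the same tangent line at p. -/

import Mathlib

open scoped Pointwise
noncomputable section

abbrev Pt := EuclideanSpace ℝ (Fin 2)

def unitDisk : Set Pt := Metric.closedBall 0 1

/-!
Near `p` the circle `σ` lies on `∂(R ⊕ D)`, hence outside the interior of `R ⊕ D`, which
contains the open disk of radius `1` about `q`. So on `σ` the distance to `q` has a local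
minimum at `p`, and by Lagrange multipliers the gradients of `‖· - q‖²` and `‖· - z‖²` at `p`,
namely `2 (p - q)` and `2 (p - z)`, are linearly dependent.
-/

open Metric
open scoped RealInnerProductSpace

theorem exists_eq_smul_of_smul_add_smul_eq_zero {K V : Type*} [Field K] [AddCommGroup V]
    [Module K V] {u w : V} {a b : K} (hab : (a, b) ≠ 0) (h : a • u + b • w = 0) (hw : w ≠ 0) :
    ∃ t : K, u = t • w := by
  have ha : a ≠ 0 := by
    rintro rfl
    have hb : b ≠ 0 := by simpa using hab
    simp_all
  refine ⟨-b / a, ?_⟩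
  rw [div_eq_inv_mul, mul_smul, neg_smul, ← eq_neg_iff_add_eq_zero.2 h, inv_smul_smul₀ ha]

section SeminormedAddCommGroup

variable {E : Type*} [SeminormedAddCommGroup E]

theorem sphere_eq_setOf_norm_sub_sq_eq {p z : E} {ρ : ℝ} (hp : p ∈ sphere z ρ) :
    sphere z ρ = {x | ‖x - z‖ ^ 2 = ‖p - z‖ ^ 2} := by
  ext x
  rw [← mem_sphere_iff_norm.1 hp, mem_sphere_iff_norm, Set.mem_ofPred_eq,
    sq_eq_sq₀ (norm_nonneg _) (norm_nonneg _)]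

theorem closedBall_subset_add_closedBall_zero {R : Set E} {q : E} (hq : q ∈ R) (r : ℝ) :
    closedBall q r ⊆ R + closedBall 0 r := by
  rw [← singleton_add_closedBall_zero]
  exact Set.add_subset_add_right (Set.singleton_subset_iff.2 hq)

theorem le_dist_of_mem_frontier_add_closedBall_zero {R : Set E} {q x : E} (hq : q ∈ R) {r : ℝ}
    (hx : x ∈ frontier (R + closedBall 0 r)) :
    r ≤ dist x q := by
  by_contra! hlt
  have hball : ball q r ⊆ interior (R + closedBall 0 r) :=
    interior_maximal (ball_subset_closedBall.trans (closedBall_subset_add_closedBall_zero hq r))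
      isOpen_ball
  exact hx.2 (hball (mem_ball.2 hlt))

end SeminormedAddCommGroup

section InnerProductSpace

variable {E : Type*} [NormedAddCommGroup E] [InnerProductSpace ℝ E]

theorem hasStrictFDerivAt_norm_sub_sq (c x : E) :
    HasStrictFDerivAt (fun y => ‖y - c‖ ^ 2) (2 • innerSL ℝ (x - c)) x :=
  (hasStrictFDerivAt_norm_sq (x - c)).comp x (hasStrictFDerivAt_sub_const c)

theorem exists_sub_eq_smul_of_isLocalMinOn_dist_sphere [CompleteSpace E] {p q z : E} {ρ : ℝ}
    (hp : p ∈ sphere z ρ) (hpq : p ≠ q) (hmin : IsLocalMinOn (dist · q) (sphere z ρ) p) :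
    ∃ t : ℝ, p - z = t • (p - q) := by
  have hmin_sq : IsLocalMinOn (fun x => ‖x - q‖ ^ 2) {x | ‖x - z‖ ^ 2 = ‖p - z‖ ^ 2} p := by
    rw [← sphere_eq_setOf_norm_sub_sq_eq hp]
    filter_upwards [hmin] with x hx
    simp only [← dist_eq_norm]
    gcongr
  obtain ⟨a, b, hab, hlin⟩ :=
    IsLocalExtrOn.exists_multipliers_of_hasStrictFDerivAt_1d (Or.inl hmin_sq)
      (hasStrictFDerivAt_norm_sub_sq z p) (hasStrictFDerivAt_norm_sub_sq q p)
  refine exists_eq_smul_of_smul_add_smul_eq_zero hab ?_ (sub_ne_zero.2 hpq)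
  have h : innerSL ℝ (2 • (a • (p - z) + b • (p - q))) = 0 := by
    rw [← hlin, map_nsmul, map_add, map_smul, map_smul, smul_add, smul_comm a, smul_comm b]
  have h2 : 2 • (a • (p - z) + b • (p - q)) = 0 := by
    simpa only [innerSL_apply_norm, norm_zero, norm_eq_zero] using congr_arg norm h
  rwa [← Nat.cast_smul_eq_nsmul ℝ, smul_eq_zero, or_iff_right (by norm_num)] at h2

end InnerProductSpace

theorem stmt7_general (R : Set Pt) (q : Pt) (hq : q ∈ R) (p : Pt)
    (hpq : ‖p - q‖ = 1)
    (z : Pt) (ρ : ℝ) (hpz : p ∈ Metric.sphere z ρ)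
    (harc : ∃ U ∈ nhds p, Metric.sphere z ρ ∩ U ⊆ frontier (R + unitDisk)) :
    ∃ t : ℝ, p - z = t • (p - q) := by
  obtain ⟨U, hU, hσU⟩ := harc
  have hne : p ≠ q := by
    rintro rfl
    simp at hpq
  refine exists_sub_eq_smul_of_isLocalMinOn_dist_sphere hpz hne ?_
  refine mem_nhdsWithin_iff_exists_mem_nhds_inter.2 ⟨U, hU, fun x hx => ?_⟩
  show dist p q ≤ dist x q
  rw [dist_eq_norm, hpq]
  exact le_dist_of_mem_frontier_add_closedBall_zero hq (hσU ⟨hx.2, hx.1⟩)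

/-- Let `p` be a boundary point of `R ⊕ D` with `p ∈ ∂D_q` for some
`q ∈ R` (where `D_q` is the closed unit disk centered at `q`).  Let `σ` be a circle
through `p` (with center `z` and radius `ρ > 0`) such that an arc of `σ` containing
`p` in its interior lies on `∂(R ⊕ D)`.  Then `σ` and the circle `∂D_q` are tangent at
`p`, i.e. they have the same tangent line at `p`; equivalently the radii `p - z` and
`p - q` are parallel. -/
theorem stmt7 (R : Set Pt) (q : Pt) (hq : q ∈ R) (p : Pt)
    (hp : p ∈ frontier (R + unitDisk)) (hpq : ‖p - q‖ = 1)
    (z : Pt) (ρ : ℝ) (hρ : 0 < ρ) (hpz : p ∈ Metric.sphere z ρ)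
    (harc : ∃ U ∈ nhds p, Metric.sphere z ρ ∩ U ⊆ frontier (R + unitDisk)) :
    ∃ t : ℝ, p - z = t • (p - q) :=
  stmt7_general R q hq p hpq z ρ hpz harc
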